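/- Define polynomials D(n) ∈ ℤ[x] by D(0)=1, D(1)=2x, D(2)=2x+x², D(3)=2x+2x², D(4)=x+4x²+x³, D(5)=5x²+4x³+x⁴, and D(n)=x·D(n−1)+x·D(n−2)+(x−x²)·D(n−3) for n ≥ 6. Then for all n ≥ 3, D(n)(1) = 2·F(n), where F is the Fibonacci sequence. -/

import Mathlib

open Polynomial

noncomputable def D : ℕ → Polynomial ℤ
  | 0 => 1
  | 1 => 2 * X
  | 2 => 2 * X + X ^ 2
  | 3 => 2 * X + 2 * X ^ 2
  | 4 => X + 4 * X ^ 2 + X ^ 3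
  | 5 => 5 * X ^ 2 + 4 * X ^ 3 + X ^ 4
  | (n + 6) => X * D (n + 5) + X * D (n + 4) + (X - X ^ 2) * D (n + 3)

/-- At `x = 1` the coefficient `x - x²` of the recurrence vanishes, leaving Fibonacci's. -/
lemma D_add_six_eval_one (n : ℕ) :
    (D (n + 6)).eval 1 = (D (n + 5)).eval 1 + (D (n + 4)).eval 1 := by
  simp [D]

lemma D_add_three_eval_one (n : ℕ) : (D (n + 3)).eval 1 = 2 * (Nat.fib (n + 3) : ℤ) := by
  induction n using Nat.strong_induction_on with
  | _ n ih =>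
    match n with
    | 0 | 1 | 2 => norm_num [D, Nat.fib_add_two]
    | m + 3 =>
      rw [D_add_six_eval_one, ih (m + 2) (by omega), ih (m + 1) (by omega),
        Nat.fib_add_two (n := m + 4)]
      push_cast
      ring

theorem D_eval_one (n : ℕ) (hn : 3 ≤ n) :
    (D n).eval 1 = 2 * (Nat.fib n : ℤ) := by
  obtain ⟨m, rfl⟩ := Nat.exists_eq_add_of_le' hn
  exact D_add_three_eval_one m
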